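/- Let π ≅ ⊕_{i=1}^r ℤ/n_iℤ be a finitely generated abelian group (where n_i = 0 is allowed, meaning ℤ). Then H²(π, ℚ/ℤ) with trivial action is isomorphic to ⊕_{1 ≤ i < j ≤ r} Hom(ℤ/n_iℤ ⊗_ℤ ℤ/n_jℤ, ℚ/ℤ). -/

import Mathlib

/-!
For trivial coefficients on an abelian group, the commutator pairing
`(x, y) ↦ f (x, y) - f (y, x)` of a 2-cocycle `f` is biadditive and alternating, and it
vanishes on coboundaries. Conversely, a cocycle with vanishing pairing is symmetric, so it
defines an abelian extension of `π` by `ℚ/ℤ`; this extension splits because `ℚ/ℤ` is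
divisible, hence injective, and a splitting exhibits `f` as a coboundary. So `H²` embeds into
the alternating forms on `π`. An alternating form on `⊕ ℤ/n_i` vanishes on each cyclic
summand, hence is determined by its components `ℤ/n_i ⊗ ℤ/n_j → ℚ/ℤ` for `i < j`; every
family `c` of components is attained, by the biadditive cocycle
`(x, y) ↦ ∑_{i<j} c_{ij} (x_i ⊗ y_j)`.
-/

open TensorProduct groupCohomology

theorem TensorProduct.addMonoidHom_ext {P Q M : Type*} [AddCommGroup P] [AddCommGroup Q]
    [AddCommGroup M] {φ ψ : P ⊗[ℤ] Q →+ M} (h : ∀ p q, φ (p ⊗ₜ q) = ψ (p ⊗ₜ q)) : φ = ψ := by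
  ext t
  induction t using TensorProduct.induction_on with
  | zero => simp only [map_zero]
  | tmul p q => exact h p q
  | add s t hs ht => rw [map_add, map_add, hs, ht]

namespace AddMonoidHom

variable {V M : Type*} [AddCommGroup V] [AddCommGroup M]

theorem apply_swap_eq_neg (B : V →+ V →+ M) (hB : ∀ x, B x x = 0) (x y : V) :
    B y x = -B x y := by
  have h := hB (x + y)
  simp only [map_add, add_apply, hB, zero_add, add_zero] at h
  exact eq_neg_of_add_eq_zero_left h

theorem eq_zero_of_isAddCyclic [IsAddCyclic V] (B : V →+ V →+ M) (hB : ∀ x, B x x = 0) :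
    B = 0 := by
  obtain ⟨g, hg⟩ := IsAddCyclic.exists_generator (α := V)
  ext x y
  obtain ⟨k, rfl⟩ := AddSubgroup.mem_zmultiples_iff.1 (hg x)
  obtain ⟨l, rfl⟩ := AddSubgroup.mem_zmultiples_iff.1 (hg y)
  simp [hB]

end AddMonoidHom

theorem Pi.single_tmul_single_eq_zero {ι : Type*} [DecidableEq ι] {C : ι → Type*}
    [∀ i, AddCommGroup (C i)] {i j k l : ι} (a : C i) (b : C j) (h : ¬(k = i ∧ l = j)) :
    Pi.single i a k ⊗ₜ[ℤ] Pi.single j b l = 0 := by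
  by_cases hk : k = i
  · rw [Pi.single_eq_of_ne (fun hl => h ⟨hk, hl⟩) b, tmul_zero]
  · rw [Pi.single_eq_of_ne hk a, zero_tmul]

section PairForms
variable {ι : Type*} [LinearOrder ι] (C : ι → Type*) [∀ i, AddCommGroup (C i)]
  (M : Type*) [AddCommGroup M]

abbrev PairTensorHoms : Type _ :=
  ∀ p : {p : ι × ι // p.1 < p.2}, C p.1.1 ⊗[ℤ] C p.1.2 →+ M

variable {C M}

def restrictPairs : ((∀ i, C i) →+ (∀ i, C i) →+ M) →+ PairTensorHoms C M :=
  AddMonoidHom.mk'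
    (fun B p => liftAddHom ((B.comp (AddMonoidHom.single C p.1.1)).compl₂
      (AddMonoidHom.single C p.1.2)) fun k a b => by
      simp only [map_zsmul, AddMonoidHom.coe_smul, Pi.smul_apply])
    fun B B' => funext fun p => addMonoidHom_ext fun a b => rfl

@[simp]
theorem restrictPairs_tmul (B : (∀ i, C i) →+ (∀ i, C i) →+ M) (p : {p : ι × ι // p.1 < p.2})
    (a : C p.1.1) (b : C p.1.2) :
    restrictPairs B p (a ⊗ₜ b) = B (Pi.single p.1.1 a) (Pi.single p.1.2 b) :=
  rfl

theorem restrictPairs_eq_zero_iff [Finite ι] [∀ i, IsAddCyclic (C i)]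
    {B : (∀ i, C i) →+ (∀ i, C i) →+ M} (hB : ∀ x, B x x = 0) :
    restrictPairs B = 0 ↔ B = 0 := by
  refine ⟨fun h => ?_, fun h => h ▸ map_zero restrictPairs⟩
  have of_lt {i j : ι} (hij : i < j) (a : C i) (b : C j) :
      B (Pi.single i a) (Pi.single j b) = 0 :=
    congrArg (fun c => c ⟨(i, j), hij⟩ (a ⊗ₜ b)) h
  refine AddMonoidHom.functions_ext _ _ _ fun i a =>
    AddMonoidHom.functions_ext _ _ _ fun j b => ?_
  rcases lt_trichotomy i j with hij | rfl | hji
  · exact of_lt hij a b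
  · exact DFunLike.congr_fun (DFunLike.congr_fun (AddMonoidHom.eq_zero_of_isAddCyclic
      ((B.comp (AddMonoidHom.single C i)).compl₂ (AddMonoidHom.single C i)) fun x => hB _) a) b
  · rw [AddMonoidHom.apply_swap_eq_neg B hB, of_lt hji, neg_zero]
    rfl

variable [Fintype ι]

def formOfPairs (c : PairTensorHoms C M) : (∀ i, C i) →+ (∀ i, C i) →+ M :=
  AddMonoidHom.mk'
    (fun x => AddMonoidHom.mk' (fun y => ∑ p, c p (x p.1.1 ⊗ₜ y p.1.2)) fun y y' => by
      simp only [Pi.add_apply, tmul_add, map_add, Finset.sum_add_distrib])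
    fun x x' => AddMonoidHom.ext fun y => by
      simp only [AddMonoidHom.mk'_apply, AddMonoidHom.add_apply, Pi.add_apply, add_tmul, map_add,
        Finset.sum_add_distrib]

theorem formOfPairs_single_single (c : PairTensorHoms C M) {i j : ι} (a : C i) (b : C j) :
    formOfPairs c (Pi.single i a) (Pi.single j b) =
      if h : i < j then c ⟨(i, j), h⟩ (a ⊗ₜ b) else 0 := by
  have hvanish (q : {p : ι × ι // p.1 < p.2}) (hq : q.1 ≠ (i, j)) :
      c q (Pi.single i a q.1.1 ⊗ₜ Pi.single j b q.1.2) = 0 := by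
    rw [Pi.single_tmul_single_eq_zero a b fun h => hq (Prod.ext h.1 h.2), map_zero]
  split_ifs with hij
  · refine (Finset.sum_eq_single_of_mem ⟨(i, j), hij⟩ (Finset.mem_univ _)
      fun q _ hq => hvanish q fun h => hq (Subtype.ext h)).trans ?_
    simp only [Pi.single_eq_same]
  · exact Finset.sum_eq_zero fun q _ => hvanish q fun h => hij (by simpa [h] using q.2)

theorem restrictPairs_formOfPairs_sub_flip (c : PairTensorHoms C M) :
    restrictPairs (formOfPairs c - (formOfPairs c).flip) = c := by
  funext p
  refine addMonoidHom_ext fun a b => ?_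
  simp [formOfPairs_single_single, p.2, not_lt_of_gt p.2]

end PairForms

namespace groupCohomology

section TrivialCocycles

variable {G M : Type} [CommGroup G] [AddCommGroup M]

theorem cocycles₂_trivial_mul_add (f : cocycles₂ (Rep.trivial ℤ G M)) (a b c : G) :
    f (a * b, c) + f (a, b) = f (b, c) + f (a, b * c) := by
  simpa only [Representation.trivial_apply] using (mem_cocycles₂_iff f).1 f.2 a b c

theorem cocycles₂_trivial_map_one_snd (f : cocycles₂ (Rep.trivial ℤ G M)) (g : G) :
    f (g, 1) = f (1, 1) := by
  simpa only [Representation.trivial_apply] using cocycles₂_map_one_snd f g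

theorem cocycles₂_trivial_sub_swap_mul (f : cocycles₂ (Rep.trivial ℤ G M)) (x y z : G) :
    f (x, y * z) - f (y * z, x) = (f (x, y) - f (y, x)) + (f (x, z) - f (z, x)) := by
  have h₁ := cocycles₂_trivial_mul_add f x y z
  have h₂ := cocycles₂_trivial_mul_add f y z x
  have h₃ := cocycles₂_trivial_mul_add f y x z
  rw [mul_comm z x] at h₂
  rw [mul_comm y x] at h₃
  linear_combination (norm := abel) h₃ - h₁ - h₂

end TrivialCocycles

section CommPairing
variable {V M : Type} [AddCommGroup V] [AddCommGroup M]
open Multiplicative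

def commPairing : cocycles₂ (Rep.trivial ℤ (Multiplicative V) M) →+ V →+ V →+ M :=
  AddMonoidHom.mk'
    (fun f => AddMonoidHom.mk'
      (fun x => AddMonoidHom.mk' (fun y => f (ofAdd x, ofAdd y) - f (ofAdd y, ofAdd x))
        fun y z => cocycles₂_trivial_sub_swap_mul f (ofAdd x) (ofAdd y) (ofAdd z))
      fun x y => AddMonoidHom.ext fun z => by
        show f (ofAdd x * ofAdd y, ofAdd z) - f (ofAdd z, ofAdd x * ofAdd y) =
          (f (ofAdd x, ofAdd z) - f (ofAdd z, ofAdd x)) +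
            (f (ofAdd y, ofAdd z) - f (ofAdd z, ofAdd y))
        rw [← neg_sub, cocycles₂_trivial_sub_swap_mul, ← neg_sub (f (ofAdd x, _)),
          ← neg_sub (f (ofAdd y, _))]
        abel)
    fun f g => AddMonoidHom.ext fun x => AddMonoidHom.ext fun y => by
      show (f (ofAdd x, ofAdd y) + g (ofAdd x, ofAdd y)) -
          (f (ofAdd y, ofAdd x) + g (ofAdd y, ofAdd x)) =
        (f (ofAdd x, ofAdd y) - f (ofAdd y, ofAdd x)) +
          (g (ofAdd x, ofAdd y) - g (ofAdd y, ofAdd x))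
      abel

@[simp]
theorem commPairing_apply (f : cocycles₂ (Rep.trivial ℤ (Multiplicative V) M)) (x y : V) :
    commPairing f x y = f (ofAdd x, ofAdd y) - f (ofAdd y, ofAdd x) :=
  rfl

theorem commPairing_self (f : cocycles₂ (Rep.trivial ℤ (Multiplicative V) M)) (x : V) :
    commPairing f x x = 0 :=
  sub_self _

theorem commPairing_eq_zero_of_mem_coboundaries₂
    (f : cocycles₂ (Rep.trivial ℤ (Multiplicative V) M))
    (hf : ⇑f ∈ coboundaries₂ (Rep.trivial ℤ (Multiplicative V) M)) : commPairing f = 0 := by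
  obtain ⟨t, ht⟩ := hf
  refine AddMonoidHom.ext fun x => AddMonoidHom.ext fun y => ?_
  rw [commPairing_apply, ← ht]
  simp only [d₁₂_hom_apply, Representation.trivial_apply, mul_comm (ofAdd y),
    AddMonoidHom.zero_apply]
  abel

end CommPairing

namespace SymmCocycle
variable {G M : Type} [CommGroup G] [AddCommGroup M]

/-- The abelian extension of `G` by `M` classified by a symmetric 2-cocycle `f`:
`G × M` with `(g, m) + (h, n) = (g * h, m + n + f (g, h))`. The symmetry proof is part of the
type only so that the `AddCommGroup` instance can use it. -/
def Extension (f : cocycles₂ (Rep.trivial ℤ G M)) (_ : ∀ g h, f (g, h) = f (h, g)) : Type :=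
  G × M

variable (f : cocycles₂ (Rep.trivial ℤ G M)) (hf : ∀ g h, f (g, h) = f (h, g))

instance : Add (Extension f hf) := ⟨fun x y => ((x.1 * y.1, x.2 + y.2 + f (x.1, y.1)) : G × M)⟩

instance : Zero (Extension f hf) := ⟨((1, -f (1, 1)) : G × M)⟩

instance : Neg (Extension f hf) :=
  ⟨fun x => ((x.1⁻¹, -x.2 - f (1, 1) - f (x.1⁻¹, x.1)) : G × M)⟩

instance : AddCommGroup (Extension f hf) where
  add_assoc x y z := Prod.ext (mul_assoc x.1 y.1 z.1) <| by
    show x.2 + y.2 + f (x.1, y.1) + z.2 + f (x.1 * y.1, z.1) =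
      x.2 + (y.2 + z.2 + f (y.1, z.1)) + f (x.1, y.1 * z.1)
    linear_combination (norm := abel) cocycles₂_trivial_mul_add f x.1 y.1 z.1
  zero_add x := Prod.ext (one_mul x.1) <| by
    show -f (1, 1) + x.2 + f (1, x.1) = x.2
    rw [cocycles₂_map_one_fst f x.1]
    abel
  add_zero x := Prod.ext (mul_one x.1) <| by
    show x.2 + -f (1, 1) + f (x.1, 1) = x.2
    rw [cocycles₂_trivial_map_one_snd f x.1]
    abel
  neg_add_cancel x := Prod.ext (inv_mul_cancel x.1) <| by
    show -x.2 - f (1, 1) - f (x.1⁻¹, x.1) + x.2 + f (x.1⁻¹, x.1) = -f (1, 1)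
    abel
  add_comm x y := Prod.ext (mul_comm x.1 y.1) <| by
    show x.2 + y.2 + f (x.1, y.1) = y.2 + x.2 + f (y.1, x.1)
    rw [hf]
    abel
  nsmul := nsmulRec
  zsmul := zsmulRec

def Extension.mk (g : G) (m : M) : Extension f hf := (g, m)

def inclusion : M →+ Extension f hf :=
  AddMonoidHom.mk' (fun m => Extension.mk f hf 1 (m - f (1, 1))) fun m n =>
    Prod.ext (mul_one 1).symm <| by
      show m + n - f (1, 1) = m - f (1, 1) + (n - f (1, 1)) + f (1, 1)
      abel

theorem inclusion_injective : Function.Injective (inclusion f hf) := fun m n h =>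
  sub_left_injective (congrArg Prod.snd h : m - f (1, 1) = n - f (1, 1))

theorem mk_zero_add_mk_zero (g h : G) :
    Extension.mk f hf g 0 + Extension.mk f hf h 0 =
      Extension.mk f hf (g * h) 0 + inclusion f hf (f (g, h)) :=
  Prod.ext (mul_one _).symm <| by
    show 0 + 0 + f (g, h) = 0 + (f (g, h) - f (1, 1)) + f (g * h, 1)
    rw [cocycles₂_trivial_map_one_snd f (g * h)]
    abel

end SymmCocycle

theorem mem_coboundaries₂_of_symm {G M : Type} [CommGroup G] [AddCommGroup M] [DivisibleBy M ℤ]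
    (f : cocycles₂ (Rep.trivial ℤ G M)) (hf : ∀ g h, f (g, h) = f (h, g)) :
    ⇑f ∈ coboundaries₂ (Rep.trivial ℤ G M) := by
  obtain ⟨π, hπ⟩ := (Module.Baer.of_divisible M).extension_property_addMonoidHom
    (SymmCocycle.inclusion f hf) (SymmCocycle.inclusion_injective f hf) (AddMonoidHom.id M)
  refine ⟨fun g => π (SymmCocycle.Extension.mk f hf g 0), funext fun ⟨g, h⟩ => ?_⟩
  have key := congrArg π (SymmCocycle.mk_zero_add_mk_zero f hf g h)
  rw [map_add, map_add, ← AddMonoidHom.comp_apply π, hπ, AddMonoidHom.id_apply] at key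
  simp only [d₁₂_hom_apply, Representation.trivial_apply]
  linear_combination (norm := abel) key

section FormCocycles
variable {V M : Type} [AddCommGroup V] [AddCommGroup M]
open Multiplicative

def cocycleOfForm (B : V →+ V →+ M) : cocycles₂ (Rep.trivial ℤ (Multiplicative V) M) :=
  ⟨fun x => B (toAdd x.1) (toAdd x.2), (mem_cocycles₂_iff _).2 fun a b c => by
    simp only [toAdd_mul, map_add, AddMonoidHom.add_apply, Representation.trivial_apply]
    abel⟩

theorem commPairing_cocycleOfForm (B : V →+ V →+ M) :
    commPairing (cocycleOfForm B) = B - B.flip :=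
  rfl

theorem commPairing_eq_zero_iff [DivisibleBy M ℤ]
    (f : cocycles₂ (Rep.trivial ℤ (Multiplicative V) M)) :
    commPairing f = 0 ↔ ⇑f ∈ coboundaries₂ (Rep.trivial ℤ (Multiplicative V) M) := by
  refine ⟨fun h => mem_coboundaries₂_of_symm f fun g g' => ?_,
    commPairing_eq_zero_of_mem_coboundaries₂ f⟩
  exact sub_eq_zero.1 (DFunLike.congr_fun (DFunLike.congr_fun h (toAdd g)) (toAdd g'))

end FormCocycles

theorem restrictPairs_commPairing_eq_zero_iff {ι : Type} [LinearOrder ι] [Finite ι]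
    {C : ι → Type} [∀ i, AddCommGroup (C i)] [∀ i, IsAddCyclic (C i)] {M : Type}
    [AddCommGroup M] [DivisibleBy M ℤ]
    (f : cocycles₂ (Rep.trivial ℤ (Multiplicative (∀ i, C i)) M)) :
    restrictPairs (commPairing f) = 0 ↔
      ⇑f ∈ coboundaries₂ (Rep.trivial ℤ (Multiplicative (∀ i, C i)) M) := by
  rw [restrictPairs_eq_zero_iff (commPairing_self f), commPairing_eq_zero_iff]

end groupCohomology

/-- If `π = ⊕_{i=1}^r ℤ/n_iℤ` (with `n_i = 0` meaning `ℤ`), then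
`H²(π, ℚ/ℤ) ≅ ⊕_{i < j} Hom(ℤ/n_iℤ ⊗_ℤ ℤ/n_jℤ, ℚ/ℤ)` (trivial action). -/
theorem stmt7 (r : ℕ) (n : Fin r → ℕ) :
    Nonempty
      (groupCohomology.H2
        (Rep.trivial ℤ (Multiplicative (∀ i : Fin r, ZMod (n i))) (AddCircle (1 : ℚ))) ≃+
      (∀ p : {p : Fin r × Fin r // p.1 < p.2},
        (ZMod (n p.1.1) ⊗[ℤ] ZMod (n p.1.2)) →+ AddCircle (1 : ℚ))) := by
  let A := Rep.trivial ℤ (Multiplicative (∀ i : Fin r, ZMod (n i))) (AddCircle (1 : ℚ))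
  let Φ : cocycles₂ A →+ PairTensorHoms (fun i => ZMod (n i)) (AddCircle (1 : ℚ)) :=
    restrictPairs.comp commPairing
  have hΦ : Function.Surjective Φ := fun c =>
    ⟨cocycleOfForm (formOfPairs c), (congrArg restrictPairs (commPairing_cocycleOfForm _)).trans
      (restrictPairs_formOfPairs_sub_flip c)⟩
  have hπ : Function.Surjective (H2π A).hom :=
    (ModuleCat.epi_iff_surjective _).1 inferInstance
  have hker : (H2π A).hom.toAddMonoidHom.ker = Φ.ker := by
    ext f
    exact (H2π_eq_zero_iff f).trans (restrictPairs_commPairing_eq_zero_iff f).symm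
  exact ⟨(QuotientAddGroup.quotientKerEquivOfSurjective _ hπ).symm.trans
    ((QuotientAddGroup.quotientAddEquivOfEq hker).trans
      (QuotientAddGroup.quotientKerEquivOfSurjective Φ hΦ))⟩
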